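/- If λ_k = -d/c is a triple eigenvalue with aλ_k+b ≠ 0 and chain y_k, y_{k+1}, y_{k+2}, then ∫₀¹ y_{k+1} y_k dx = -(ad-bc)·( y_{k+1}'(1)/(aλ_k+b) - a·y_k'(1)/(aλ_k+b)² ) · y_k'(1)/(aλ_k+b). -/

import Mathlib

open MeasureTheory Set

/-- Lemma 4.2(a): inner product of the first associated function with the eigenfunction
at a triple eigenvalue `λk = -d/c`. -/
theorem assoc_eigen_inner_product_triple_critical
    (a b c d β : ℝ) (habcd : a * d - b * c < 0) (hac : a * c ≠ 0)
    (hβ0 : 0 ≤ β) (hβπ : β < Real.pi)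
    (q : ℝ → ℝ) (hq : ContinuousOn q (Icc (0:ℝ) 1))
    (lam : ℝ) (hcd : c * lam + d = 0) (hab : a * lam + b ≠ 0)
    (y0 y0' y0'' y1 y1' y1'' : ℝ → ℝ)
    (hy0 : ∀ x ∈ Icc (0:ℝ) 1, HasDerivAt y0 (y0' x) x)
    (hy0' : ∀ x ∈ Icc (0:ℝ) 1, HasDerivAt y0' (y0'' x) x)
    (hy0'' : ContinuousOn y0'' (Icc (0:ℝ) 1))
    (hy1 : ∀ x ∈ Icc (0:ℝ) 1, HasDerivAt y1 (y1' x) x)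
    (hy1' : ∀ x ∈ Icc (0:ℝ) 1, HasDerivAt y1' (y1'' x) x)
    (hy1'' : ContinuousOn y1'' (Icc (0:ℝ) 1))
    (hode0 : ∀ x ∈ Icc (0:ℝ) 1, -y0'' x + q x * y0 x = lam * y0 x)
    (hode1 : ∀ x ∈ Icc (0:ℝ) 1, -y1'' x + q x * y1 x = lam * y1 x + y0 x)
    (hbc00 : y0 0 * Real.cos β = y0' 0 * Real.sin β)
    (hbc01 : y1 0 * Real.cos β = y1' 0 * Real.sin β)
    (hbc10 : (a * lam + b) * y0 1 = (c * lam + d) * y0' 1)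
    (hbc11 : (a * lam + b) * y1 1 + a * y0 1 = (c * lam + d) * y1' 1 + c * y0' 1)
    (y2 y2' y2'' : ℝ → ℝ)
    (hy2 : ∀ x ∈ Icc (0:ℝ) 1, HasDerivAt y2 (y2' x) x)
    (hy2' : ∀ x ∈ Icc (0:ℝ) 1, HasDerivAt y2' (y2'' x) x)
    (hy2'' : ContinuousOn y2'' (Icc (0:ℝ) 1))
    (hode2 : ∀ x ∈ Icc (0:ℝ) 1, -y2'' x + q x * y2 x = lam * y2 x + y1 x)
    (hbc02 : y2 0 * Real.cos β = y2' 0 * Real.sin β)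
    (hbc12 : (a * lam + b) * y2 1 + a * y1 1 = (c * lam + d) * y2' 1 + c * y1' 1)
    :
    ∫ x in (0:ℝ)..1, y1 x * y0 x
      = -(a * d - b * c) * (y1' 1 / (a * lam + b) - a * y0' 1 / (a * lam + b) ^ 2)
          * (y0' 1 / (a * lam + b)) := by

  have hIcc : uIcc (0:ℝ) 1 = Icc 0 1 := uIcc_of_le zero_le_one
  have cy0 : ContinuousOn y0 (Icc (0:ℝ) 1) :=
    fun x hx => (hy0 x hx).continuousAt.continuousWithinAt
  have cy2 : ContinuousOn y2 (Icc (0:ℝ) 1) :=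
    fun x hx => (hy2 x hx).continuousAt.continuousWithinAt
  set F : ℝ → ℝ := fun x => y0' x * y2 x - y2' x * y0 x with hFdef
  have hFd : ∀ x ∈ uIcc (0:ℝ) 1,
      HasDerivAt F (y0'' x * y2 x - y2'' x * y0 x) x := by
    intro x hx
    rw [hIcc] at hx
    have h := ((hy0' x hx).mul (hy2 x hx)).sub ((hy2' x hx).mul (hy0 x hx))
    convert h using 1
    · rfl
    · rfl
    · rfl
    ring
  have hInt : IntervalIntegrable (fun x => y0'' x * y2 x - y2'' x * y0 x)
      MeasureTheory.volume 0 1 := by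
    apply ContinuousOn.intervalIntegrable
    rw [hIcc]
    exact (hy0''.mul cy2).sub (hy2''.mul cy0)
  have key : ∫ x in (0:ℝ)..1, (y0'' x * y2 x - y2'' x * y0 x) = F 1 - F 0 :=
    intervalIntegral.integral_eq_sub_of_hasDerivAt hFd hInt
  have congr1 : ∫ x in (0:ℝ)..1, y1 x * y0 x
      = ∫ x in (0:ℝ)..1, (y0'' x * y2 x - y2'' x * y0 x) := by
    apply intervalIntegral.integral_congr
    intro x hx
    rw [hIcc] at hx
    have h0 := hode0 x hx
    have h2 := hode2 x hx
    have e1 : y1 x = -y2'' x + q x * y2 x - lam * y2 x := by linarith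
    have e2 : y0'' x = q x * y0 x - lam * y0 x := by linarith
    show y1 x * y0 x = y0'' x * y2 x - y2'' x * y0 x
    rw [e1, e2]; ring
  -- boundary term at 0 vanishes
  have h1 : F 0 * Real.sin β = 0 := by
    simp only [hFdef]
    linear_combination -y2 0 * hbc00 + y0 0 * hbc02
  have h2 : F 0 * Real.cos β = 0 := by
    simp only [hFdef]
    linear_combination -y2' 0 * hbc00 + y0' 0 * hbc02
  have hF0 : F 0 = 0 := by
    linear_combination Real.sin β * h1 + Real.cos β * h2 - F 0 * Real.sin_sq_add_cos_sq β
  -- boundary values at 1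
  have hy01 : y0 1 = 0 := by
    have : (a * lam + b) * y0 1 = 0 := by rw [hbc10, hcd]; ring
    rcases mul_eq_zero.mp this with h | h
    · exact absurd h hab
    · exact h
  have e11 : (a * lam + b) * y1 1 = c * y0' 1 := by
    have := hbc11
    rw [hcd, hy01] at this
    linarith
  have e12 : (a * lam + b) * y2 1 + a * y1 1 = c * y1' 1 := by
    have := hbc12
    rw [hcd] at this
    linarith
  have hy21 : y2 1 = c * y1' 1 / (a * lam + b) - a * c * y0' 1 / (a * lam + b) ^ 2 := by
    field_simp
    linear_combination (a * lam + b) * e12 - a * e11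
  have hK : -(a * d - b * c) = c * (a * lam + b) := by linear_combination -a * hcd
  rw [congr1, key, hF0, hFdef]
  simp only [hy01, mul_zero, sub_zero]
  rw [hy21, hK]
  field_simp
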